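/- arXiv:1309.0152 — 2 statements merged into one kernel-verified Lean document; each statement's English description precedes it below -/
import Mathlib

section
/- Let a : ℕ → ℝ and define ā_k = Σ_{j=k}^∞ (f_{j+1}^2/(f_k f_{k+1})) a_j, assumed to converge absolutely with ā ∈ ℓ_1. Then the operator norm of the continuous linear functional x ↦ Σ_k a_k x_k on ℓ_∞(F̂) equals Σ_k |ā_k|. -/
/-!
`F̂` is a bijection of sequences (solve `F̂x = y` by forward substitution), so `x ↦ F̂x` is an
isometry of `ℓ_∞(F̂)` onto `ℓ_∞`. Through the representation `Σ a_k x_k = Σ ā_k (F̂x)_k` the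
functional becomes `y ↦ Σ ā_k y_k` on the unit ball of `ℓ_∞`, which is bounded by `Σ |ā_k|` and
attains it at `y = sign ā`.
-/

open scoped BigOperators ENNReal
open Filter Topology

noncomputable def fibr (n : ℕ) : ℝ := (Nat.fib (n + 1) : ℝ)

lemma fibr_pos (n : ℕ) : 0 < fibr n := by
  simpa [fibr] using Nat.cast_pos.mpr (Nat.fib_pos.mpr (Nat.succ_pos n))

noncomputable def Fhat (x : ℕ → ℝ) : ℕ → ℝ
  | 0 => x 0
  | (n + 1) => fibr (n + 1) / fibr (n + 2) * x (n + 1) - fibr (n + 2) / fibr (n + 1) * x n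

lemma Fhat_add (x y : ℕ → ℝ) : Fhat (x + y) = Fhat x + Fhat y := by
  funext n; cases n <;> simp [Fhat] <;> ring

lemma Fhat_smul (c : ℝ) (x : ℕ → ℝ) : Fhat (c • x) = c • Fhat x := by
  funext n; cases n <;> simp [Fhat] <;> ring

noncomputable def FhatL : (ℕ → ℝ) →ₗ[ℝ] (ℕ → ℝ) where
  toFun := Fhat
  map_add' := Fhat_add
  map_smul' := Fhat_smul

lemma Fhat_inj : Function.Injective Fhat := by
  have h0 : ∀ x : ℕ → ℝ, Fhat x = 0 → x = 0 := by
    intro x hx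
    funext n
    induction n with
    | zero => simpa [Fhat] using congrFun hx 0
    | succ n ih =>
        have h := congrFun hx (n + 1)
        simp only [Fhat, ih, Pi.zero_apply, mul_zero, sub_zero] at h
        have h1 : fibr (n + 1) / fibr (n + 2) ≠ 0 :=
          div_ne_zero (fibr_pos _).ne' (fibr_pos _).ne'
        simpa [Pi.zero_apply] using (mul_eq_zero.mp h).resolve_left h1
  have : Function.Injective FhatL := (injective_iff_map_eq_zero' FhatL).mpr
    (fun x => ⟨fun h => h0 x h, fun h => by simp [FhatL, h]; funext n; cases n <;> simp [Fhat]⟩)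
  exact this

noncomputable def FhatLP : PreLp (fun _ : ℕ => ℝ) →ₗ[ℝ] PreLp (fun _ : ℕ => ℝ) where
  toFun x := Fhat x
  map_add' x y := Fhat_add x y
  map_smul' c x := Fhat_smul c x

noncomputable def ellF (p : ℝ≥0∞) : Submodule ℝ (PreLp (fun _ : ℕ => ℝ)) :=
  (lpSubmodule ℝ (fun _ : ℕ => ℝ) p).comap FhatLP

instance (p : ℝ≥0∞) : CoeOut (ellF p) (ℕ → ℝ) := ⟨fun x => (x : PreLp (fun _ : ℕ => ℝ))⟩

noncomputable def ellFtoLp (p : ℝ≥0∞) : ellF p →ₗ[ℝ] lp (fun _ : ℕ => ℝ) p where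
  toFun x := ⟨Fhat (x : ℕ → ℝ), x.2⟩
  map_add' x y := Subtype.ext (Fhat_add (x : ℕ → ℝ) (y : ℕ → ℝ))
  map_smul' c x := Subtype.ext (Fhat_smul c (x : ℕ → ℝ))

lemma ellFtoLp_inj (p : ℝ≥0∞) : Function.Injective (ellFtoLp p) := by
  intro x y h
  have h2 : Fhat (x : ℕ → ℝ) = Fhat (y : ℕ → ℝ) := congrArg Subtype.val h
  exact Subtype.ext (Fhat_inj h2)

noncomputable instance (p : ℝ≥0∞) [Fact (1 ≤ p)] : NormedAddCommGroup (ellF p) :=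
  NormedAddCommGroup.induced _ _ (ellFtoLp p) (ellFtoLp_inj p)

noncomputable instance (p : ℝ≥0∞) [Fact (1 ≤ p)] : NormedSpace ℝ (ellF p) :=
  NormedSpace.induced _ _ _ (ellFtoLp p)

noncomputable def abar (a : ℕ → ℝ) (k : ℕ) : ℝ :=
  ∑' j : ℕ, (fibr (k + j + 1)) ^ 2 / (fibr k * fibr (k + 1)) * a (k + j)

noncomputable def hmnc {X : Type*} [MetricSpace X] (Q : Set X) : ℝ :=
  sInf {ε : ℝ | 0 < ε ∧ ∃ s : Finset X, Q ⊆ ⋃ x ∈ s, Metric.ball x ε}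



instance factTop : Fact ((1 : ℝ≥0∞) ≤ ∞) := ⟨le_top⟩

lemma abs_tsum_mul_le_of_abs_le_one {ι : Type*} {b y : ι → ℝ} (hb : Summable fun k => |b k|)
    (hy : ∀ k, |y k| ≤ 1) : |∑' k, b k * y k| ≤ ∑' k, |b k| :=
  tsum_of_norm_bounded (f := fun k => b k * y k) hb.hasSum fun k => by
    simpa only [Real.norm_eq_abs, abs_mul] using mul_le_of_le_one_right (abs_nonneg (b k)) (hy k)

lemma abs_sign_le_one (r : ℝ) : |(SignType.sign r : ℝ)| ≤ 1 := by
  rcases lt_trichotomy r 0 with hr | rfl | hr <;> simp [*]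

noncomputable def FhatInv (y : ℕ → ℝ) : ℕ → ℝ
  | 0 => y 0
  | (n + 1) =>
    fibr (n + 2) / fibr (n + 1) * (y (n + 1) + fibr (n + 2) / fibr (n + 1) * FhatInv y n)

lemma Fhat_FhatInv (y : ℕ → ℝ) : Fhat (FhatInv y) = y := by
  funext n
  cases n with
  | zero => rfl
  | succ n =>
    have h1 := (fibr_pos (n + 1)).ne'
    have h2 := (fibr_pos (n + 2)).ne'
    simp only [Fhat, FhatInv]
    field_simp
    ring

lemma norm_ellF_eq (p : ℝ≥0∞) [Fact (1 ≤ p)] (x : ellF p) : ‖x‖ = ‖ellFtoLp p x‖ := rfl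

lemma ellFtoLp_surjective (p : ℝ≥0∞) : Function.Surjective (ellFtoLp p) := fun y =>
  ⟨⟨FhatInv y, show Memℓp (Fhat (FhatInv y)) p by rw [Fhat_FhatInv]; exact y.2⟩,
    Subtype.ext (Fhat_FhatInv y)⟩

lemma abs_Fhat_le_norm (x : ellF ∞) (k : ℕ) : |Fhat (x : ℕ → ℝ) k| ≤ ‖x‖ :=
  (lp.norm_apply_le_norm ENNReal.top_ne_zero (ellFtoLp ∞ x) k).trans_eq (norm_ellF_eq ∞ x).symm

noncomputable def signLp (b : ℕ → ℝ) : lp (fun _ : ℕ => ℝ) ∞ :=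
  ⟨fun k => SignType.sign (b k), memℓp_infty ⟨1, by
    rintro r ⟨k, rfl⟩
    exact abs_sign_le_one (b k)⟩⟩

lemma norm_signLp_le_one (b : ℕ → ℝ) : ‖signLp b‖ ≤ 1 :=
  lp.norm_le_of_forall_le zero_le_one fun k => abs_sign_le_one (b k)

theorem stmt6_general (a : ℕ → ℝ)
    (habar : Summable fun k : ℕ => |abar a k|)
    (hrep : ∀ x : ellF ∞, Summable (fun k : ℕ => a k * (x : ℕ → ℝ) k) ∧
      ∑' k : ℕ, a k * (x : ℕ → ℝ) k = ∑' k : ℕ, abar a k * Fhat (x : ℕ → ℝ) k) :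
    sSup {c : ℝ | ∃ x : ellF ∞, ‖x‖ ≤ 1 ∧ c = |∑' k : ℕ, a k * (x : ℕ → ℝ) k|} =
      ∑' k : ℕ, |abar a k| := by
  obtain ⟨x₀, hx₀⟩ := ellFtoLp_surjective ∞ (signLp (abar a))
  have hFx₀ : Fhat (x₀ : ℕ → ℝ) = fun k => (SignType.sign (abar a k) : ℝ) :=
    congrArg Subtype.val hx₀
  refine IsGreatest.csSup_eq ⟨⟨x₀, ?_, ?_⟩, ?_⟩
  · rw [norm_ellF_eq, hx₀]
    exact norm_signLp_le_one _
  · simp only [(hrep x₀).2, hFx₀, self_mul_sign]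
    exact (abs_of_nonneg (tsum_nonneg fun k => abs_nonneg _)).symm
  · rintro c ⟨x, hx, rfl⟩
    rw [(hrep x).2]
    exact abs_tsum_mul_le_of_abs_le_one habar fun k => (abs_Fhat_le_norm x k).trans hx

theorem stmt6 (a : ℕ → ℝ)
    (ha : ∀ k : ℕ, Summable fun j : ℕ => |fibr (k + j + 1) ^ 2 / (fibr k * fibr (k + 1)) * a (k + j)|)
    (habar : Summable fun k : ℕ => |abar a k|)
    (hrep : ∀ x : ellF ∞, Summable (fun k : ℕ => a k * (x : ℕ → ℝ) k) ∧
      ∑' k : ℕ, a k * (x : ℕ → ℝ) k = ∑' k : ℕ, abar a k * Fhat (x : ℕ → ℝ) k) :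
    sSup {c : ℝ | ∃ x : ellF ∞, ‖x‖ ≤ 1 ∧ c = |∑' k : ℕ, a k * (x : ℕ → ℝ) k|} =
      ∑' k : ℕ, |abar a k| :=
  stmt6_general a habar hrep
end

section
/- Let 1 ≤ p < ∞ and let A induce a bounded operator L_A : ℓ_1(F̂) → ℓ_p, with ā_{nk} = Σ_{j=k}^∞ (f_{j+1}^2/(f_k f_{k+1})) a_{nj}. Then the Hausdorff measure of noncompactness of L_A equals lim_{m→∞} sup_k (Σ_{n=m}^∞ |ā_{nk}|^p)^{1/p}, and consequently L_A is compact if and only if lim_{m→∞} sup_k (Σ_{n=m}^∞ |ā_{nk}|^p)^{1/p} = 0. -/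
open scoped BigOperators ENNReal
open Filter Topology

instance factOne : Fact ((1 : ℝ≥0∞) ≤ 1) := ⟨le_rfl⟩

/-!
Truncation to the first `m` coordinates is a finite-rank, hence compact, operator on `ℓ_p`, and
the distance from `z` to its truncation is the norm of the tail `(z_{m+n})_n`. Hence a set
`Q ⊆ ℓ_p` is covered by finitely many balls of radius `sup_{z ∈ Q} ‖tail_m z‖ + ε`; conversely the
tails of the finitely many centres of a cover of `Q` become uniformly small as `m → ∞`. Thus
`χ(Q) = lim_m sup_{z ∈ Q} ‖tail_m z‖`.

`F̂` is an isometry of `ℓ_1(F̂)` onto `ℓ_1`, so the vectors `e_k = F̂⁻¹ δ_k` have norm one and every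
`x` is the absolutely convergent sum `∑ (F̂x)_k e_k` with `∑ |(F̂x)_k| = ‖x‖`. Therefore the supremum
of `‖tail_m (L x)‖` over the unit sphere is the supremum over the columns `L e_k`, and
`(L e_k)_n = ∑_j a_{nj} (e_k)_j = ā_{nk}`. Finally, since the closed unit ball is the convex hull of
`S`, `L` maps bounded sets to totally bounded ones iff `L(S)` is totally bounded, i.e. iff
`χ(L(S)) = 0`.
-/

section Hmnc

variable {X : Type*} [MetricSpace X] {Q : Set X}

lemma hmnc_nonneg (Q : Set X) : 0 ≤ hmnc Q :=
  Real.sInf_nonneg fun _ h => h.1.le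

lemma hmnc_le {ε : ℝ} (hε : 0 < ε) {s : Finset X} (hs : Q ⊆ ⋃ x ∈ s, Metric.ball x ε) :
    hmnc Q ≤ ε :=
  csInf_le ⟨0, fun _ h => h.1.le⟩ ⟨hε, s, hs⟩

lemma hmnc_le_of_forall_dist_le {K : Set X} (hK : TotallyBounded K) {r : ℝ} (hr : 0 ≤ r)
    (h : ∀ z ∈ Q, ∃ k ∈ K, dist z k ≤ r) : hmnc Q ≤ r := by
  refine le_of_forall_pos_le_add fun ε hε => ?_
  obtain ⟨t, ht, hKt⟩ := Metric.totallyBounded_iff.mp hK ε hε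
  refine hmnc_le (by positivity) (s := ht.toFinset) fun z hz => ?_
  obtain ⟨k, hk, hzk⟩ := h z hz
  obtain ⟨c, hc, hkc⟩ := Set.mem_iUnion₂.mp (hKt hk)
  refine Set.mem_iUnion₂.mpr ⟨c, ht.mem_toFinset.mpr hc, ?_⟩
  calc dist z c ≤ dist z k + dist k c := dist_triangle z k c
    _ < r + ε := add_lt_add_of_le_of_lt hzk hkc

lemma hmnc_eq_zero_iff [Nonempty X] (hQ : Bornology.IsBounded Q) :
    hmnc Q = 0 ↔ TotallyBounded Q := by
  refine ⟨fun h0 => Metric.totallyBounded_iff.mpr fun ε hε => ?_, fun hQ => ?_⟩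
  · have hcov : {ε : ℝ | 0 < ε ∧ ∃ s : Finset X, Q ⊆ ⋃ x ∈ s, Metric.ball x ε}.Nonempty := by
      obtain ⟨r, hr⟩ := hQ.subset_ball (Classical.arbitrary X)
      refine ⟨max r 1, by positivity, {Classical.arbitrary X}, ?_⟩
      simpa using hr.trans (Metric.ball_subset_ball (le_max_left r 1))
    obtain ⟨δ, ⟨-, s, hs⟩, hδε⟩ := exists_lt_of_csInf_lt hcov (h0.symm ▸ hε : hmnc Q < ε)
    refine ⟨s, s.finite_toSet, hs.trans fun z hz => ?_⟩
    obtain ⟨c, hc, hzc⟩ := Set.mem_iUnion₂.mp hz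
    exact Set.mem_iUnion₂.mpr ⟨c, hc, Metric.ball_subset_ball hδε.le hzc⟩
  · refine le_antisymm ?_ (hmnc_nonneg Q)
    exact hmnc_le_of_forall_dist_le hQ le_rfl fun z hz => ⟨z, hz, (dist_self z).le⟩

end Hmnc

section LpTail

variable {P : ℝ≥0∞} [Fact (1 ≤ P)]

private lemma toReal_pos_of_ne_top (hP : P ≠ ⊤) : 0 < P.toReal :=
  ENNReal.toReal_pos (zero_lt_one.trans_le Fact.out).ne' hP

variable (P) in
noncomputable def lpTrunc (m : ℕ) : lp (fun _ : ℕ => ℝ) P →L[ℝ] lp (fun _ : ℕ => ℝ) P :=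
  ∑ n ∈ Finset.range m,
    (lp.singleContinuousLinearMap ℝ (fun _ : ℕ => ℝ) P n).comp (lp.evalCLM ℝ (fun _ : ℕ => ℝ) P n)

variable (P) in
noncomputable def lpTail (m : ℕ) : lp (fun _ : ℕ => ℝ) P →L[ℝ] lp (fun _ : ℕ => ℝ) P :=
  ContinuousLinearMap.id ℝ _ - lpTrunc P m

lemma lpTrunc_apply (m : ℕ) (z : lp (fun _ : ℕ => ℝ) P) :
    lpTrunc P m z = ∑ n ∈ Finset.range m, lp.single P n (z n) := by
  simp [lpTrunc, lp.evalCLM]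

lemma lpTail_apply (m : ℕ) (z : lp (fun _ : ℕ => ℝ) P) :
    lpTail P m z = z - ∑ n ∈ Finset.range m, lp.single P n (z n) := by
  simp [lpTail, lpTrunc_apply]

lemma lpTail_zero (z : lp (fun _ : ℕ => ℝ) P) : lpTail P 0 z = z := by
  simp [lpTail_apply]

lemma dist_lpTrunc (m : ℕ) (z : lp (fun _ : ℕ => ℝ) P) :
    dist z (lpTrunc P m z) = ‖lpTail P m z‖ := by
  rw [dist_eq_norm, lpTail_apply, lpTrunc_apply]

lemma isCompactOperator_lpTrunc (m : ℕ) : IsCompactOperator (lpTrunc P m) := by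
  refine Submodule.sum_mem (compactOperator (RingHom.id ℝ) _ _) fun n _ => ?_
  exact (isCompactOperator_of_locallyCompactSpace_rng
    (lp.singleContinuousLinearMap ℝ (fun _ : ℕ => ℝ) P n)).comp_clm
      (lp.evalCLM ℝ (fun _ : ℕ => ℝ) P n)

lemma norm_lpTail_rpow (hP : P ≠ ⊤) (m : ℕ) (z : lp (fun _ : ℕ => ℝ) P) :
    ‖lpTail P m z‖ ^ P.toReal = ‖z‖ ^ P.toReal - ∑ n ∈ Finset.range m, ‖z n‖ ^ P.toReal := by
  rw [lpTail_apply, lp.norm_compl_sum_single (toReal_pos_of_ne_top hP)]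

lemma norm_lpTail (hP : P ≠ ⊤) (m : ℕ) (z : lp (fun _ : ℕ => ℝ) P) :
    ‖lpTail P m z‖ = (∑' n, ‖z (m + n)‖ ^ P.toReal) ^ (1 / P.toReal) := by
  have hP' := toReal_pos_of_ne_top hP
  have hsum := (lp.hasSum_norm hP' z).summable.sum_add_tsum_nat_add m
  rw [← lp.norm_rpow_eq_tsum hP', ← eq_sub_iff_add_eq', ← norm_lpTail_rpow hP] at hsum
  simp_rw [add_comm m, hsum, one_div, Real.rpow_rpow_inv (norm_nonneg _) hP'.ne']

lemma antitone_norm_lpTail (hP : P ≠ ⊤) (z : lp (fun _ : ℕ => ℝ) P) :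
    Antitone fun m => ‖lpTail P m z‖ := by
  have hP' := toReal_pos_of_ne_top hP
  intro m m' h
  rw [← Real.rpow_le_rpow_iff (norm_nonneg _) (norm_nonneg _) hP', norm_lpTail_rpow hP,
    norm_lpTail_rpow hP]
  gcongr

lemma norm_lpTail_le (hP : P ≠ ⊤) (m : ℕ) (z : lp (fun _ : ℕ => ℝ) P) :
    ‖lpTail P m z‖ ≤ ‖z‖ := by
  simpa [lpTail_zero] using antitone_norm_lpTail hP z (Nat.zero_le m)

lemma tendsto_norm_lpTail (hP : P ≠ ⊤) (z : lp (fun _ : ℕ => ℝ) P) :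
    Tendsto (fun m => ‖lpTail P m z‖) atTop (𝓝 0) := by
  have h := (tendsto_const_nhds (x := z)).sub (lp.hasSum_single hP z).tendsto_sum_nat
  simpa [lpTail_apply] using h.norm

end LpTail

section HmncLp

variable {P : ℝ≥0∞} [Fact (1 ≤ P)] {Q : Set (lp (fun _ : ℕ => ℝ) P)} {g : ℕ → ℝ}

lemma hmnc_le_of_isLUB_norm_lpTail
    (hg : ∀ m, IsLUB ((fun z => ‖lpTail P m z‖) '' Q) (g m)) (m : ℕ) : hmnc Q ≤ g m := by
  have hnorm : ∀ m, ∀ z ∈ Q, ‖lpTail P m z‖ ≤ g m := fun m z hz => (hg m).1 ⟨z, hz, rfl⟩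
  have hQ : Bornology.IsBounded Q :=
    (Metric.isBounded_closedBall (x := 0) (r := g 0)).subset fun z hz => by
      simpa [lpTail_zero] using hnorm 0 z hz
  obtain ⟨K, hK, hQK⟩ := (isCompactOperator_lpTrunc m).image_subset_compact_of_bounded hQ
  obtain ⟨z₀, hz₀⟩ : Q.Nonempty := (hg m).nonempty.of_image
  refine hmnc_le_of_forall_dist_le hK.totallyBounded ((norm_nonneg _).trans (hnorm m z₀ hz₀))
    fun z hz => ⟨lpTrunc P m z, hQK ⟨z, hz, rfl⟩, ?_⟩
  rw [dist_lpTrunc]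
  exact hnorm m z hz

lemma iInf_le_hmnc_of_isLUB_norm_lpTail (hP : P ≠ ⊤)
    (hg : ∀ m, IsLUB ((fun z => ‖lpTail P m z‖) '' Q) (g m)) : ⨅ m, g m ≤ hmnc Q := by
  have hnorm : ∀ m, ∀ z ∈ Q, ‖lpTail P m z‖ ≤ g m := fun m z hz => (hg m).1 ⟨z, hz, rfl⟩
  have hbdd : BddBelow (Set.range g) :=
    ⟨hmnc Q, by rintro _ ⟨m, rfl⟩; exact hmnc_le_of_isLUB_norm_lpTail hg m⟩
  have hg0 : 0 ≤ g 0 := (hmnc_nonneg Q).trans (hmnc_le_of_isLUB_norm_lpTail hg 0)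
  refine le_csInf ⟨g 0 + 1, by positivity, {0}, fun z hz => ?_⟩ ?_
  · have := hnorm 0 z hz
    rw [lpTail_zero] at this
    simpa using this.trans_lt (lt_add_one _)
  rintro ε ⟨-, s, hs⟩
  refine le_of_forall_pos_le_add fun δ hδ => ?_
  have htend : Tendsto (fun m => ∑ c ∈ s, ‖lpTail P m c‖) atTop (𝓝 0) := by
    simpa using tendsto_finsetSum s fun c _ => tendsto_norm_lpTail hP c
  obtain ⟨m, hm⟩ := (htend.eventually (gt_mem_nhds hδ)).exists
  refine (ciInf_le hbdd m).trans ((hg m).2 ?_)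
  rintro _ ⟨z, hz, rfl⟩
  obtain ⟨c, hc, hzc⟩ := Set.mem_iUnion₂.mp (hs hz)
  calc ‖lpTail P m z‖ ≤ ‖lpTail P m c‖ + ‖lpTail P m (z - c)‖ := by
        simpa using norm_add_le (lpTail P m c) (lpTail P m (z - c))
    _ ≤ ∑ c ∈ s, ‖lpTail P m c‖ + ‖z - c‖ :=
        add_le_add (Finset.single_le_sum (fun c _ => norm_nonneg _) hc) (norm_lpTail_le hP m _)
    _ ≤ ε + δ := by linarith [mem_ball_iff_norm.mp hzc]

theorem tendsto_hmnc_of_isLUB_norm_lpTail (hP : P ≠ ⊤)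
    (hg : ∀ m, IsLUB ((fun z => ‖lpTail P m z‖) '' Q) (g m)) : Tendsto g atTop (𝓝 (hmnc Q)) := by
  have hanti : Antitone g := fun m m' h => (hg m').2 <| by
    rintro _ ⟨z, hz, rfl⟩
    exact (antitone_norm_lpTail hP z h).trans ((hg m).1 ⟨z, hz, rfl⟩)
  have hbdd : BddBelow (Set.range g) :=
    ⟨hmnc Q, by rintro _ ⟨m, rfl⟩; exact hmnc_le_of_isLUB_norm_lpTail hg m⟩
  convert tendsto_atTop_ciInf hanti hbdd using 2
  exact le_antisymm (le_ciInf (hmnc_le_of_isLUB_norm_lpTail hg))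
    (iInf_le_hmnc_of_isLUB_norm_lpTail hP hg)

end HmncLp

lemma ContinuousLinearMap.norm_apply_le_of_hasSum_smul {E F : Type*} [NormedAddCommGroup E]
    [NormedSpace ℝ E] [NormedAddCommGroup F] [NormedSpace ℝ F] (T : E →L[ℝ] F) {c : ℕ → ℝ} {e : ℕ → E} {x : E}
    (hx : HasSum (fun k => c k • e k) x) {r : ℝ} (hc : HasSum (fun k => |c k|) r) {C : ℝ}
    (hC : ∀ k, ‖T (e k)‖ ≤ C) : ‖T x‖ ≤ r * C := by
  refine (hx.mapL T).norm_le_of_bounded (hc.mul_right C) fun k => ?_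
  rw [map_smul, norm_smul, Real.norm_eq_abs]
  exact mul_le_mul_of_nonneg_left (hC k) (abs_nonneg _)

lemma ContinuousLinearMap.forall_totallyBounded_image_iff_sphere {E F : Type*}
    [NormedAddCommGroup E] [NormedSpace ℝ E] [Nontrivial E] [NormedAddCommGroup F] [NormedSpace ℝ F] (T : E →L[ℝ] F) :
    (∀ s : Set E, Bornology.IsBounded s → TotallyBounded (T '' s)) ↔
      TotallyBounded (T '' Metric.sphere 0 1) := by
  refine ⟨fun h => h _ Metric.isBounded_sphere, fun h s hs => ?_⟩
  have hball : TotallyBounded (T '' Metric.closedBall 0 1) := by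
    rw [← convexHull_sphere_eq_closedBall 0 zero_le_one]
    exact (T.toLinearMap.image_convexHull _ ▸ h.convexHull :)
  obtain ⟨R, hR⟩ := hs.subset_closedBall 0
  have hR1 : 0 < max R 1 := by positivity
  refine (hball.image (uniformContinuous_const_smul (max R 1))).subset ?_
  rintro _ ⟨x, hx, rfl⟩
  refine ⟨T ((max R 1)⁻¹ • x), ⟨(max R 1)⁻¹ • x, ?_, rfl⟩, ?_⟩
  · have := hR hx
    rw [mem_closedBall_zero_iff] at this ⊢
    rw [norm_smul, norm_inv, Real.norm_of_nonneg hR1.le, inv_mul_le_iff₀ hR1, mul_one]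
    exact this.trans (le_max_left R 1)
  · rw [map_smul]
    exact smul_inv_smul₀ hR1.ne' _

section EllF

noncomputable def FhatInvSingle (k : ℕ) : ℕ → ℝ :=
  fun j => if k ≤ j then fibr (j + 1) ^ 2 / (fibr k * fibr (k + 1)) else 0

lemma Fhat_FhatInvSingle (k : ℕ) : Fhat (FhatInvSingle k) = Pi.single k 1 := by
  have hf (n : ℕ) : fibr n ≠ 0 := (fibr_pos n).ne'
  funext n
  cases n with
  | zero => rcases k with _ | k <;> simp [Fhat, FhatInvSingle, fibr]
  | succ n =>
    simp only [Fhat, FhatInvSingle]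
    rcases lt_trichotomy k (n + 1) with h | rfl | h
    · rw [if_pos (by omega), if_pos (by omega), Pi.single_eq_of_ne (by omega)]
      field_simp [hf]
      ring
    · rw [if_pos le_rfl, if_neg (by omega), Pi.single_eq_same, mul_zero, sub_zero]
      field_simp [hf]
    · rw [if_neg (by omega), if_neg (by omega), Pi.single_eq_of_ne (by omega)]
      ring

lemma tsum_mul_FhatInvSingle (a : ℕ → ℝ) (k : ℕ) :
    ∑' j, a j * FhatInvSingle k j = abar a k := by
  rw [abar, ← (add_right_injective k).tsum_eq]
  · refine tsum_congr fun j => ?_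
    rw [FhatInvSingle, if_pos (Nat.le_add_right k j), mul_comm, add_assoc k j 1]
  · intro j hj
    by_contra hjk
    have hkj : ¬ k ≤ j := fun h => hjk ⟨j - k, Nat.add_sub_cancel' h⟩
    exact hj (by simp [FhatInvSingle, hkj])

noncomputable def ellFBasis (k : ℕ) : ellF 1 :=
  ⟨FhatInvSingle k, by
    show Memℓp (Fhat (FhatInvSingle k)) 1
    have h := (lp.single (E := fun _ : ℕ => ℝ) 1 k (1 : ℝ)).2
    rwa [lp.coeFn_single, ← Fhat_FhatInvSingle] at h⟩

noncomputable def ellFtoLpIsometry : ellF 1 →ₗᵢ[ℝ] lp (fun _ : ℕ => ℝ) 1 :=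
  ⟨ellFtoLp 1, fun _ => rfl⟩

lemma ellFtoLpIsometry_apply (x : ellF 1) :
    (ellFtoLpIsometry x : ℕ → ℝ) = Fhat (x : ℕ → ℝ) := rfl

lemma ellFtoLpIsometry_ellFBasis (k : ℕ) : ellFtoLpIsometry (ellFBasis k) = lp.single 1 k 1 :=
  Subtype.ext <| (Fhat_FhatInvSingle k).trans (lp.coeFn_single 1 k 1).symm

lemma norm_ellFBasis (k : ℕ) : ‖ellFBasis k‖ = 1 := by
  rw [← ellFtoLpIsometry.norm_map, ellFtoLpIsometry_ellFBasis, lp.norm_single (by norm_num),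
    norm_one]

instance : Nontrivial (ellF 1) :=
  nontrivial_of_ne (ellFBasis 0) 0 (ne_zero_of_norm_ne_zero (by simp [norm_ellFBasis]))

lemma hasSum_Fhat_smul_ellFBasis (x : ellF 1) :
    HasSum (fun k => Fhat (x : ℕ → ℝ) k • ellFBasis k) x := by
  rw [← ellFtoLpIsometry.isometry.isUniformInducing.isInducing.hasSum_iff]
  convert lp.hasSum_single ENNReal.one_ne_top (ellFtoLpIsometry x) using 2 with k
  simp only [Function.comp_apply, map_smul, ellFtoLpIsometry_ellFBasis, ellFtoLpIsometry_apply,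
    ← lp.single_smul, smul_eq_mul, mul_one]

lemma hasSum_abs_Fhat (x : ellF 1) : HasSum (fun k => |Fhat (x : ℕ → ℝ) k|) ‖x‖ := by
  have h := lp.hasSum_norm (p := 1) (by norm_num) (ellFtoLpIsometry x)
  simp only [ENNReal.toReal_one, Real.rpow_one, ellFtoLpIsometry.norm_map, ellFtoLpIsometry_apply,
    Real.norm_eq_abs] at h
  exact h

lemma isLUB_norm_image_sphere_ellF {F : Type*} [NormedAddCommGroup F] [NormedSpace ℝ F]
    (T : ellF 1 →L[ℝ] F) :
    IsLUB ((fun x => ‖T x‖) '' Metric.sphere 0 1) (⨆ k, ‖T (ellFBasis k)‖) := by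
  have hbdd : BddAbove (Set.range fun k => ‖T (ellFBasis k)‖) :=
    ⟨‖T‖, by rintro _ ⟨k, rfl⟩; simpa [norm_ellFBasis] using T.le_opNorm (ellFBasis k)⟩
  refine ⟨?_, fun b hb => ciSup_le fun k => hb ⟨ellFBasis k, by simp [norm_ellFBasis], rfl⟩⟩
  rintro _ ⟨x, hx, rfl⟩
  rw [mem_sphere_zero_iff_norm] at hx
  simpa [hx] using T.norm_apply_le_of_hasSum_smul (hasSum_Fhat_smul_ellFBasis x)
    (hasSum_abs_Fhat x) (le_ciSup hbdd)

end EllF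

theorem stmt15_general (p : ℝ) [Fact (1 ≤ ENNReal.ofReal p)]
    (A : ℕ → ℕ → ℝ)
    (L : ellF 1 →L[ℝ] lp (fun _ : ℕ => ℝ) (ENNReal.ofReal p))
    (hrep : ∀ x : ellF 1, ∀ n : ℕ, (L x : ℕ → ℝ) n = ∑' k : ℕ, A n k * (x : ℕ → ℝ) k) :
    Tendsto (fun m : ℕ => ⨆ k : ℕ, (∑' n : ℕ, |abar (A (m + n)) k| ^ p) ^ (1 / p)) atTop
      (𝓝 (hmnc (⇑L '' Metric.sphere 0 1))) ∧
    ((∀ s : Set (ellF 1), Bornology.IsBounded s → TotallyBounded (⇑L '' s)) ↔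
      Tendsto (fun m : ℕ => ⨆ k : ℕ, (∑' n : ℕ, |abar (A (m + n)) k| ^ p) ^ (1 / p)) atTop (𝓝 0)) := by
  have hP : ENNReal.ofReal p ≠ ⊤ := ENNReal.ofReal_ne_top
  have hp' : (ENNReal.ofReal p).toReal = p :=
    ENNReal.toReal_ofReal (zero_le_one.trans (ENNReal.one_le_ofReal.mp Fact.out))
  set g := fun m : ℕ => ⨆ k : ℕ, (∑' n : ℕ, |abar (A (m + n)) k| ^ p) ^ (1 / p)
  have hcol : ∀ m, g m = ⨆ k, ‖(lpTail _ m).comp L (ellFBasis k)‖ := fun m => by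
    simp_rw [g, ContinuousLinearMap.comp_apply, norm_lpTail hP, hp', hrep, ellFBasis,
      tsum_mul_FhatInvSingle, Real.norm_eq_abs]
  have hlim : Tendsto g atTop (𝓝 (hmnc (L '' Metric.sphere 0 1))) :=
    tendsto_hmnc_of_isLUB_norm_lpTail hP fun m => by
      rw [hcol, Set.image_image]
      exact isLUB_norm_image_sphere_ellF ((lpTail _ m).comp L)
  refine ⟨hlim, ?_⟩
  rw [L.forall_totallyBounded_image_iff_sphere,
    ← hmnc_eq_zero_iff (L.lipschitz.isBounded_image Metric.isBounded_sphere)]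
  exact ⟨fun h => h ▸ hlim, tendsto_nhds_unique hlim⟩

theorem stmt15 (p : ℝ) (hp : 1 ≤ p) [Fact (1 ≤ ENNReal.ofReal p)]
    (A : ℕ → ℕ → ℝ)
    (ha : ∀ n k : ℕ, Summable fun j : ℕ => |fibr (k + j + 1) ^ 2 / (fibr k * fibr (k + 1)) * A n (k + j)|)
    (L : ellF 1 →L[ℝ] lp (fun _ : ℕ => ℝ) (ENNReal.ofReal p))
    (hrep : ∀ x : ellF 1, ∀ n : ℕ, (L x : ℕ → ℝ) n = ∑' k : ℕ, A n k * (x : ℕ → ℝ) k) :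
    Tendsto (fun m : ℕ => ⨆ k : ℕ, (∑' n : ℕ, |abar (A (m + n)) k| ^ p) ^ (1 / p)) atTop
      (𝓝 (hmnc (⇑L '' Metric.sphere 0 1))) ∧
    ((∀ s : Set (ellF 1), Bornology.IsBounded s → TotallyBounded (⇑L '' s)) ↔
      Tendsto (fun m : ℕ => ⨆ k : ℕ, (∑' n : ℕ, |abar (A (m + n)) k| ^ p) ^ (1 / p)) atTop (𝓝 0)) :=
  stmt15_general p A L hrep
end
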